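/- arXiv:1604.01284 — 6 statements merged into one kernel-verified Lean document; each statement's English description precedes it below -/
import Mathlib

section
/- Let γ : ℝ → ℝ² be a C² curve parametrized by arclength satisfying the shrinker equation k + ⟨γ, ν⟩ = 0, where ν is the counterclockwise rotation of γ' by π/2 and k = ⟨γ'', ν⟩. Then the quantity E(s) = k(s)·exp(−|γ(s)|²/2) is constant along the curve. -/
open Real

/-- The counterclockwise rotation by 90 degrees in the plane. -/
def rot (v : ℝ × ℝ) : ℝ × ℝ := (-v.2, v.1)

/-- Dot product in the plane. -/
def dot (v w : ℝ × ℝ) : ℝ := v.1 * w.1 + v.2 * w.2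

theorem shrinker_energy_constant
    (γ : ℝ → ℝ × ℝ)
    (hγ : ContDiff ℝ 2 γ)
    (harc : ∀ s, dot (deriv γ s) (deriv γ s) = 1)
    (k : ℝ → ℝ)
    (hk : ∀ s, k s = dot (deriv (deriv γ) s) (rot (deriv γ s)))
    (hshrinker : ∀ s, k s + dot (γ s) (rot (deriv γ s)) = 0) :
    ∃ C : ℝ, ∀ s, k s * Real.exp (-(dot (γ s) (γ s)) / 2) = C := by
  have hd1 : Differentiable ℝ γ := hγ.differentiable (by norm_num)
  have hd2 : Differentiable ℝ (deriv γ) :=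
    (hγ.iterate_deriv' 1 1).differentiable (by norm_num)
  set F : ℝ → ℝ := fun s =>
    ((γ s).1 * (deriv γ s).2 - (γ s).2 * (deriv γ s).1) *
      Real.exp (-((γ s).1 * (γ s).1 + (γ s).2 * (γ s).2) / 2) with hF
  have hFd : ∀ s, HasDerivAt F 0 s := by
    intro s
    set a := (γ s).1
    set b := (γ s).2
    set a1 := (deriv γ s).1
    set b1 := (deriv γ s).2
    set a2 := (deriv (deriv γ) s).1
    set b2 := (deriv (deriv γ) s).2
    have hγs : HasDerivAt γ (deriv γ s) s := (hd1 s).hasDerivAt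
    have hγs2 : HasDerivAt (deriv γ) (deriv (deriv γ) s) s := (hd2 s).hasDerivAt
    have hx : HasDerivAt (fun t => (γ t).1) a1 s := hγs.fst
    have hy : HasDerivAt (fun t => (γ t).2) b1 s := hγs.snd
    have hx1 : HasDerivAt (fun t => (deriv γ t).1) a2 s := hγs2.fst
    have hy1 : HasDerivAt (fun t => (deriv γ t).2) b2 s := hγs2.snd
    -- scalar facts
    have h1 : a1 * a1 + b1 * b1 = 1 := harc s
    have h2 : a1 * a2 + b1 * b2 = 0 := by
      have hg : HasDerivAt (fun t => (deriv γ t).1 * (deriv γ t).1 +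
          (deriv γ t).2 * (deriv γ t).2) (a2 * a1 + a1 * a2 + (b2 * b1 + b1 * b2)) s :=
        (hx1.mul hx1).add (hy1.mul hy1)
      have hg' : (fun t => (deriv γ t).1 * (deriv γ t).1 +
          (deriv γ t).2 * (deriv γ t).2) = fun _ => (1 : ℝ) := by
        funext t; exact harc t
      rw [hg'] at hg
      have := hg.unique (hasDerivAt_const s 1)
      linarith
    have h3 : k s = a2 * (-b1) + b2 * a1 := hk s
    have h4 : k s = a * b1 - b * a1 := by
      have := hshrinker s
      simp only [dot, rot] at this
      linarith
    have ha2 : a2 = -(k s) * b1 := by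
      rw [h3]; linear_combination (-a2) * h1 + a1 * h2
    have hb2 : b2 = (k s) * a1 := by
      rw [h3]; linear_combination (-b2) * h1 + b1 * h2
    -- derivative of F
    have hu : HasDerivAt (fun t => (γ t).1 * (deriv γ t).2 - (γ t).2 * (deriv γ t).1)
        (a1 * b1 + a * b2 - (b1 * a1 + b * a2)) s := (hx.mul hy1).sub (hy.mul hx1)
    have hq : HasDerivAt (fun t => -((γ t).1 * (γ t).1 + (γ t).2 * (γ t).2) / 2)
        (-(a1 * a + a * a1 + (b1 * b + b * b1)) / 2) s :=
      (((hx.mul hx).add (hy.mul hy)).neg).div_const 2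
    have he := hq.exp
    have hD := hu.mul he
    have hval : (a1 * b1 + a * b2 - (b1 * a1 + b * a2)) *
        Real.exp (-(a * a + b * b) / 2) +
        (a * b1 - b * a1) *
          (Real.exp (-(a * a + b * b) / 2) * (-(a1 * a + a * a1 + (b1 * b + b * b1)) / 2))
        = 0 := by
      have key : a1 * b1 + a * b2 - (b1 * a1 + b * a2)
          = (a * b1 - b * a1) * (a * a1 + b * b1) := by
        rw [ha2, hb2, ← h4]; ring
      rw [key]; ring
    rw [hval] at hD
    exact hD
  have hFdiff : Differentiable ℝ F := fun s => (hFd s).differentiableAt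
  have hconst := is_const_of_deriv_eq_zero hFdiff (fun s => (hFd s).deriv)
  refine ⟨F 0, fun s => ?_⟩
  have : k s * Real.exp (-(dot (γ s) (γ s)) / 2) = F s := by
    have h4 : k s = (γ s).1 * (deriv γ s).2 - (γ s).2 * (deriv γ s).1 := by
      have := hshrinker s
      simp only [dot, rot] at this
      linarith
    simp only [hF, dot, h4]
  rw [this, hconst s 0]
end

section
/- The sequence (c_n) defined by c_0 = 1 and c_{n+1} = (4/3)(1 + log c_n) is strictly increasing, the sequence (d_n) defined by d_0 = 3 and d_{n+1} = (4/3)(1 + log d_n) is strictly decreasing, and for every n ≥ 0 one has √(1 + log c_n) < R̄ < √(1 + log d_n), where R̄ > 1 is the unique real number satisfying R̄²/2 − log R̄ = 1/2 − log(√3/2). -/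
open Real

theorem barR_sequence_approximation
    (R : ℝ) (hR : 1 < R)
    (hμ : R ^ 2 / 2 - Real.log R = 1 / 2 - Real.log (Real.sqrt 3 / 2))
    (c d : ℕ → ℝ)
    (hc0 : c 0 = 1) (hcrec : ∀ n, c (n + 1) = 4 / 3 * (1 + Real.log (c n)))
    (hd0 : d 0 = 3) (hdrec : ∀ n, d (n + 1) = 4 / 3 * (1 + Real.log (d n))) :
    StrictMono c ∧ StrictAnti d ∧
    ∀ n, Real.sqrt (1 + Real.log (c n)) < R ∧ R < Real.sqrt (1 + Real.log (d n)) := by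
  have hRpos : (0:ℝ) < R := lt_trans one_pos hR
  have hR2gt : (1:ℝ) < R ^ 2 := by nlinarith
  set L : ℝ := 4 / 3 * R ^ 2 with hLdef
  have hLpos : (0:ℝ) < L := by positivity
  -- log computations
  have hlog4 : Real.log (4 / 3 : ℝ) = 2 * Real.log 2 - Real.log 3 := by
    rw [Real.log_div (by norm_num) (by norm_num),
      show (4:ℝ) = 2 ^ 2 by norm_num, Real.log_pow]
    push_cast; ring
  have hlogL : Real.log L = 2 * Real.log 2 - Real.log 3 + 2 * Real.log R := by
    rw [hLdef, Real.log_mul (by norm_num) (by positivity), Real.log_pow, hlog4]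
    push_cast; ring
  have hlogs : Real.log (Real.sqrt 3 / 2) = Real.log 3 / 2 - Real.log 2 := by
    rw [Real.log_div (by positivity) (by norm_num), Real.log_sqrt (by norm_num)]
  -- key identity: R² = 1 + log L
  have hR2 : R ^ 2 = 1 + Real.log L := by
    rw [hlogL]; rw [hlogs] at hμ; linarith
  have hLfix : L = 4 / 3 * (1 + Real.log L) := by rw [← hR2]
  -- log 3 < 5/4
  have hlog3 : Real.log 3 < 5 / 4 := by
    have h2 : Real.log 2 < 0.6931471808 := Real.log_two_lt_d9
    have h32 : Real.log (3/2 : ℝ) ≤ 3/2 - 1 :=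
      Real.log_le_sub_one_of_pos (by norm_num)
    have h3 : Real.log 3 = Real.log 2 + Real.log (3/2 : ℝ) := by
      rw [← Real.log_mul (by norm_num) (by norm_num)]; norm_num
    rw [h3]; linarith
  -- bounds on L
  have hL1 : (1:ℝ) < L := by rw [hLdef]; nlinarith
  have hL3 : L < 3 := by
    by_contra h
    push_neg at h
    have hR94 : (9:ℝ)/4 ≤ R ^ 2 := by rw [hLdef] at h; linarith
    have hsplit : Real.log L = Real.log 3 + Real.log (4 * R ^ 2 / 9) := by
      rw [← Real.log_mul (by norm_num) (by positivity)]
      rw [hLdef]; ring_nf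
    have hle : Real.log (4 * R ^ 2 / 9) ≤ 4 * R ^ 2 / 9 - 1 :=
      Real.log_le_sub_one_of_pos (by positivity)
    nlinarith [hR2]
  -- invariants for c
  have hc : ∀ n, 1 ≤ c n ∧ c n < c (n + 1) ∧ c n < L := by
    intro n
    induction n with
    | zero =>
      refine ⟨le_of_eq hc0.symm, ?_, by rw [hc0]; exact hL1⟩
      rw [hcrec 0, hc0, Real.log_one]; norm_num
    | succ n ih =>
      obtain ⟨h1, h2, h3⟩ := ih
      have hcnpos : (0:ℝ) < c n := lt_of_lt_of_le one_pos h1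
      have hlognn : 0 ≤ Real.log (c n) := Real.log_nonneg h1
      have hlt : Real.log (c n) < Real.log (c (n+1)) := Real.log_lt_log hcnpos h2
      have hltL : Real.log (c n) < Real.log L := Real.log_lt_log hcnpos h3
      refine ⟨?_, ?_, ?_⟩
      · rw [hcrec n]; linarith
      · rw [hcrec n, hcrec (n+1)]; linarith
      · rw [hcrec n]; linarith [hLfix]
  -- invariants for d
  have hd : ∀ n, L < d n ∧ d (n + 1) < d n := by
    intro n
    induction n with
    | zero =>
      refine ⟨by rw [hd0]; exact hL3, ?_⟩
      rw [hdrec 0, hd0]; linarith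
    | succ n ih =>
      obtain ⟨h1, h2⟩ := ih
      have hdnpos : (0:ℝ) < d n := lt_trans hLpos h1
      have hgtL : Real.log L < Real.log (d n) := Real.log_lt_log hLpos h1
      have hLd1 : L < d (n + 1) := by rw [hdrec n]; linarith [hLfix]
      have hd1pos : (0:ℝ) < d (n + 1) := lt_trans hLpos hLd1
      refine ⟨hLd1, ?_⟩
      rw [hdrec (n+1)]
      have := Real.log_lt_log hd1pos h2
      linarith [hdrec n]
  refine ⟨strictMono_nat_of_lt_succ (fun n => (hc n).2.1),
    strictAnti_nat_of_succ_lt (fun n => (hd n).2), fun n => ?_⟩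
  obtain ⟨h1, _, h3⟩ := hc n
  obtain ⟨h4, _⟩ := hd n
  have hcnpos : (0:ℝ) < c n := lt_of_lt_of_le one_pos h1
  constructor
  · have hlt : 1 + Real.log (c n) < R ^ 2 := by
      rw [hR2]; linarith [Real.log_lt_log hcnpos h3]
    calc Real.sqrt (1 + Real.log (c n)) < Real.sqrt (R ^ 2) :=
          Real.sqrt_lt_sqrt (by linarith [Real.log_nonneg h1]) hlt
      _ = R := by rw [Real.sqrt_sq hRpos.le]
  · have hlt : R ^ 2 < 1 + Real.log (d n) := by
      rw [hR2]; linarith [Real.log_lt_log hLpos h4]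
    calc R = Real.sqrt (R ^ 2) := by rw [Real.sqrt_sq hRpos.le]
      _ < Real.sqrt (1 + Real.log (d n)) := Real.sqrt_lt_sqrt (sq_nonneg R) hlt
end

section
/- Let R ≥ R̄ and a = −μ(R) − log(√3/2), where μ(x) = x²/2 − log(x) and R̄ > 1 satisfies μ(R̄) = 1/2 − log(√3/2). Let d(R) be the unique solution in (0,1] of μ(d(R)) = μ(R) + log(√3/2). Define sequences a_0 = a, a_{n+1} = a + (1/2)exp(2a_n) and b_0 = a + 1/2, b_{n+1} = a + (1/2)exp(2b_n). Then (a_n) is strictly increasing, and exp(a_n) < d(R) ≤ exp(b_n) for all n ≥ 0; moreover, if R > R̄ then (b_n) is strictly decreasing. -/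
open Real

/-- μ(x) = x²/2 − log x. -/
noncomputable def mu (x : ℝ) : ℝ := x ^ 2 / 2 - Real.log x

lemma exp_diff_lt_aux {u v : ℝ} (huv : u < v) (hv : v ≤ 0) :
    Real.exp v - Real.exp u < v - u := by
  have h1 : Real.exp v ≤ 1 := Real.exp_le_one_iff.mpr hv
  have h2 : (u - v) + 1 < Real.exp (u - v) := Real.add_one_lt_exp (by linarith)
  have h3 : Real.exp u = Real.exp v * Real.exp (u - v) := by
    rw [← Real.exp_add]; ring_nf
  have h4 : (0:ℝ) < Real.exp v := Real.exp_pos v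
  nlinarith [mul_lt_mul_of_pos_left h2 h4]

theorem dR_sequence_approximation
    (barR R dR a : ℝ)
    (hbarR : 1 < barR)
    (hμbarR : mu barR = 1 / 2 - Real.log (Real.sqrt 3 / 2))
    (hR : barR ≤ R)
    (hdR : 0 < dR ∧ dR ≤ 1 ∧ mu dR = mu R + Real.log (Real.sqrt 3 / 2))
    (ha : a = -mu R - Real.log (Real.sqrt 3 / 2))
    (A B : ℕ → ℝ)
    (hA0 : A 0 = a) (hArec : ∀ n, A (n + 1) = a + 1 / 2 * Real.exp (2 * A n))
    (hB0 : B 0 = a + 1 / 2) (hBrec : ∀ n, B (n + 1) = a + 1 / 2 * Real.exp (2 * B n)) :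
    StrictMono A ∧
    (∀ n, Real.exp (A n) < dR ∧ dR ≤ Real.exp (B n)) ∧
    (barR < R → StrictAnti B) := by
  obtain ⟨hd0, hd1, hmu⟩ := hdR
  set L := Real.log dR with hLdef
  have hL0 : L ≤ 0 := Real.log_nonpos hd0.le hd1
  have hexpL : Real.exp L = dR := Real.exp_log hd0
  have hsq : dR ^ 2 = Real.exp (2 * L) := by
    rw [two_mul, Real.exp_add, hexpL]; ring
  have hfix : L = a + 1 / 2 * Real.exp (2 * L) := by
    have h := hmu
    unfold mu at h
    rw [hsq, ← hLdef] at h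
    have ha' := ha
    unfold mu at ha'
    linarith
  -- A n < L
  have hAlt : ∀ n, A n < L := by
    intro n
    induction n with
    | zero =>
      have := Real.exp_pos (2 * L)
      rw [hA0]; linarith
    | succ n ih =>
      rw [hArec]
      have : Real.exp (2 * A n) < Real.exp (2 * L) :=
        Real.exp_lt_exp.mpr (by linarith)
      linarith
  have hmonoA : StrictMono A := by
    apply strictMono_nat_of_lt_succ
    intro n
    have h := hAlt n
    have key : Real.exp (2 * L) - Real.exp (2 * A n) < 2 * L - 2 * A n :=
      exp_diff_lt_aux (by linarith) (by linarith)
    rw [hArec]; linarith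
  -- L ≤ B n
  have hBge : ∀ n, L ≤ B n := by
    intro n
    induction n with
    | zero =>
      have : Real.exp (2 * L) ≤ 1 := Real.exp_le_one_iff.mpr (by linarith)
      rw [hB0]; linarith
    | succ n ih =>
      rw [hBrec]
      have : Real.exp (2 * L) ≤ Real.exp (2 * B n) :=
        Real.exp_le_exp.mpr (by linarith)
      linarith
  refine ⟨hmonoA, fun n => ⟨by rw [← hexpL]; exact Real.exp_lt_exp.mpr (hAlt n),
    by rw [← hexpL]; exact Real.exp_le_exp.mpr (hBge n)⟩, ?_⟩
  intro hlt
  -- first: mu barR < mu R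
  have hb0 : (0:ℝ) < barR := by linarith
  have hR0 : (0:ℝ) < R := by linarith
  have hmuR : mu barR < mu R := by
    have hlog : Real.log (R / barR) ≤ R / barR - 1 :=
      Real.log_le_sub_one_of_pos (div_pos hR0 hb0)
    rw [Real.log_div (ne_of_gt hR0) (ne_of_gt hb0)] at hlog
    have hdiv : R / barR < R - barR + 1 := by
      rw [div_lt_iff₀ hb0]; nlinarith
    unfold mu
    nlinarith
  -- dR < 1
  have hdlt1 : dR < 1 := by
    rcases lt_or_eq_of_le hd1 with h | h
    · exact h
    · exfalso
      have h1 : mu dR = mu 1 := by rw [h]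
      have h2 : mu 1 = 1 / 2 := by unfold mu; simp
      rw [hmu] at h1
      linarith
  have hLneg : L < 0 := Real.log_neg hd0 hdlt1
  -- key invariant for B
  have hkey : ∀ n, L < B n ∧ B n < 0 := by
    intro n
    induction n with
    | zero =>
      constructor
      · have : Real.exp (2 * L) < 1 := Real.exp_lt_one_iff.mpr (by linarith)
        rw [hB0]; linarith
      · have : 2 * L + 1 < Real.exp (2 * L) := by
          have := Real.add_one_lt_exp (x := 2 * L) (by linarith)
          linarith
        rw [hB0]; linarith
    | succ n ih =>
      obtain ⟨ih1, ih2⟩ := ih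
      have hgt : L < B (n + 1) := by
        rw [hBrec]
        have : Real.exp (2 * L) < Real.exp (2 * B n) :=
          Real.exp_lt_exp.mpr (by linarith)
        linarith
      have hlt' : B (n + 1) < B n := by
        have key : Real.exp (2 * B n) - Real.exp (2 * L) < 2 * B n - 2 * L :=
          exp_diff_lt_aux (by linarith) (by linarith)
        rw [hBrec]; linarith
      exact ⟨hgt, by linarith⟩
  apply strictAnti_nat_of_succ_lt
  intro n
  obtain ⟨h1, h2⟩ := hkey n
  have key : Real.exp (2 * B n) - Real.exp (2 * L) < 2 * B n - 2 * L :=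
    exp_diff_lt_aux (by linarith) (by linarith)
  rw [hBrec]; linarith
end

section
/- For R > 1, let μ(x) = x²/2 − log(x) and define f(ρ,R) = exp(μ(ρ)−μ(R)) / (ρ·√(1 − exp(2[μ(ρ)−μ(R)]))) for ρ in the open interval where μ(ρ) < μ(R). Then ρ ↦ f(ρ,R) is strictly convex on this interval, i.e., ∂²f/∂ρ² > 0. -/
/-!
With `t = μ(ρ) − μ(R) < 0` we have
`log f(ρ, R) = −log ρ + t + ½ · (−log (1 − exp (2t)))`.
Here `−log ρ` is strictly convex, `t` is convex because `μ` is, and `1 − exp (2t)` is concave and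
positive, so composing it with the convex decreasing `−log` gives a convex function. Hence `log f`
is strictly convex, and so is `f = exp (log f)`.
-/

open Real Set

/-- f(ρ, R) = exp(μ(ρ)−μ(R)) / (ρ √(1 − exp(2(μ(ρ)−μ(R))))). -/
noncomputable def f (ρ R : ℝ) : ℝ :=
  Real.exp (mu ρ - mu R) / (ρ * Real.sqrt (1 - Real.exp (2 * (mu ρ - mu R))))

section LogConvexity

variable {E : Type*} [AddCommMonoid E] [Module ℝ E] {s : Set E} {φ : E → ℝ}

theorem ConvexOn.exp (hφ : ConvexOn ℝ s φ) : ConvexOn ℝ s fun x => exp (φ x) :=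
  ⟨hφ.1, fun _ hx _ hy _ _ ha hb hab =>
    (exp_monotone (hφ.2 hx hy ha hb hab)).trans
      (convexOn_exp.2 (mem_univ _) (mem_univ _) ha hb hab)⟩

theorem StrictConvexOn.exp (hφ : StrictConvexOn ℝ s φ) :
    StrictConvexOn ℝ s fun x => exp (φ x) :=
  ⟨hφ.1, fun _ hx _ hy hxy _ _ ha hb hab =>
    (exp_strictMono (hφ.2 hx hy hxy ha hb hab)).trans_le
      (convexOn_exp.2 (mem_univ _) (mem_univ _) ha.le hb.le hab)⟩

theorem ConcaveOn.neg_log (hφ : ConcaveOn ℝ s φ) (hpos : ∀ x ∈ s, 0 < φ x) :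
    ConvexOn ℝ s fun x => -log (φ x) := by
  refine ⟨hφ.1, fun x hx y hy a b ha hb hab => ?_⟩
  have hmix : a • φ x + b • φ y ∈ Ioi 0 :=
    convex_Ioi (0 : ℝ) (hpos x hx) (hpos y hy) ha hb hab
  calc -log (φ (a • x + b • y))
      ≤ -log (a • φ x + b • φ y) :=
        neg_le_neg (log_le_log hmix (hφ.2 hx hy ha hb hab))
    _ ≤ a • -log (φ x) + b • -log (φ y) :=
        strictConcaveOn_log_Ioi.concaveOn.neg.2 (hpos x hx) (hpos y hy) ha hb hab

theorem ConvexOn.neg_log_one_sub_exp (hφ : ConvexOn ℝ s φ) (hneg : ∀ x ∈ s, φ x < 0) :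
    ConvexOn ℝ s fun x => -log (1 - Real.exp (φ x)) :=
  ((concaveOn_const 1 hφ.1).sub hφ.exp).neg_log fun x hx =>
    sub_pos.2 (exp_lt_one_iff.2 (hneg x hx))

end LogConvexity

theorem convexOn_mu : ConvexOn ℝ (Ioi 0) mu := by
  refine ((((convexOn_pow 2).subset Ioi_subset_Ici_self (convex_Ioi 0)).smul
    (inv_nonneg.2 zero_le_two)).sub strictConcaveOn_log_Ioi.concaveOn).congr fun x _ => ?_
  simp only [Pi.sub_apply, smul_eq_mul, mu]
  ring

theorem f_eq_exp {ρ R : ℝ} (hρ : 0 < ρ) (hμ : mu ρ < mu R) :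
    f ρ R = exp (-log ρ + (mu ρ - mu R) + (1 / 2) * -log (1 - exp (2 * (mu ρ - mu R)))) := by
  have hpos : 0 < 1 - exp (2 * (mu ρ - mu R)) := sub_pos.2 (exp_lt_one_iff.2 (by linarith))
  rw [exp_add, exp_add, exp_neg, exp_log hρ, mul_neg, exp_neg, mul_comm (1 / 2 : ℝ),
    ← rpow_def_of_pos hpos, ← sqrt_eq_rpow, f]
  field_simp

theorem f_strictly_convex_general (R : ℝ) :
    StrictConvexOn ℝ {ρ : ℝ | 0 < ρ ∧ mu ρ < mu R} (fun ρ => f ρ R) := by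
  set S := {ρ : ℝ | 0 < ρ ∧ mu ρ < mu R}
  have hS : S ⊆ Ioi 0 := fun ρ hρ => hρ.1
  have hSconv : Convex ℝ S := convexOn_mu.convex_lt (mu R)
  have hφ : ConvexOn ℝ S fun ρ => mu ρ - mu R :=
    (convexOn_mu.subset hS hSconv).add_const (-mu R)
  have hlog : StrictConvexOn ℝ S fun ρ => -log ρ :=
    strictConcaveOn_log_Ioi.neg.subset hS hSconv
  have hψ : ConvexOn ℝ S fun ρ => -log (1 - exp (2 * (mu ρ - mu R))) :=
    ConvexOn.neg_log_one_sub_exp (hφ.smul zero_le_two) fun ρ hρ => by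
      simpa only [smul_eq_mul] using mul_neg_of_pos_of_neg two_pos (sub_neg.2 hρ.2)
  refine ((hlog.add_convexOn hφ).add_convexOn (hψ.smul one_half_pos.le)).exp.congr ?_
  exact fun ρ hρ => (f_eq_exp hρ.1 hρ.2).symm

theorem f_strictly_convex (R : ℝ) (hR : 1 < R) :
    StrictConvexOn ℝ {ρ : ℝ | 0 < ρ ∧ mu ρ < mu R} (fun ρ => f ρ R) :=
  f_strictly_convex_general R
end

section
/- Let R > 1, μ(x) = x²/2 − log(x), and f(ρ,R) = exp(μ(ρ)−μ(R)) / (ρ·√(1 − exp(2[μ(ρ)−μ(R)]))). Then for all ρ with 1 < ρ < R, f(ρ,R) < 1/√((R² − ρ²)(ρ² − 1)). -/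
/-! With `c = 2(μ(R) - μ(ρ)) = R² - ρ² - log(R²/ρ²)`, the inequality `1 + c < eᶜ`
gives `f(ρ, R) < 1 / (ρ √c)`, and `log t < t - 1` at `t = R²/ρ²` gives
`ρ² c > (R² - ρ²)(ρ² - 1)`. -/

open Real

theorem exp_div_sqrt_one_sub_exp_two_mul_lt {x : ℝ} (hx : x < 0) :
    exp x / √(1 - exp (2 * x)) < 1 / √(-2 * x) := by
  have hc : 0 < -2 * x := by linarith
  -- `1 + c < eᶜ` with `c = -2x`, multiplied by `e⁻ᶜ = e²ˣ`
  have hkey : -2 * x * exp (2 * x) < 1 - exp (2 * x) := by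
    have h := add_one_lt_exp hc.ne'
    have hinv : exp (2 * x) * exp (-2 * x) = 1 := by rw [← exp_add]; simp
    nlinarith [exp_pos (2 * x)]
  have hsqrt : exp x * √(-2 * x) < √(1 - exp (2 * x)) := by
    have hexp : exp x = √(exp (2 * x)) := by
      rw [two_mul, exp_add, sqrt_mul_self (exp_pos x).le]
    rw [hexp, ← sqrt_mul (exp_pos _).le, mul_comm]
    exact sqrt_lt_sqrt (by positivity) hkey
  have hden : 0 < √(1 - exp (2 * x)) := (mul_pos (exp_pos x) (sqrt_pos.2 hc)).trans hsqrt
  rw [div_lt_div_iff₀ hden (sqrt_pos.2 hc), one_mul]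
  exact hsqrt

theorem sub_mul_sub_one_div_lt_sub_sub_log {a b : ℝ} (ha : 0 < a) (hb : 0 < b) (hab : a ≠ b) :
    (b - a) * (a - 1) / a < b - a - log (b / a) := by
  have hlog := log_lt_sub_one_of_pos (div_pos hb ha)
    (by rwa [ne_eq, div_eq_one_iff_eq ha.ne', eq_comm])
  have hsplit : (b - a) * (a - 1) / a = b - a - (b / a - 1) := by field_simp
  linarith

theorem two_mul_mu_sub_mu {r s : ℝ} (hr : r ≠ 0) (hs : s ≠ 0) :
    2 * (mu s - mu r) = s ^ 2 - r ^ 2 - log (s ^ 2 / r ^ 2) := by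
  rw [log_div (pow_ne_zero 2 hs) (pow_ne_zero 2 hr), log_pow, log_pow, mu, mu]
  push_cast
  ring

theorem f_upper_bound_general (R ρ : ℝ) (hρ1 : 1 < ρ) (hρR : ρ < R) :
    f ρ R < 1 / Real.sqrt ((R ^ 2 - ρ ^ 2) * (ρ ^ 2 - 1)) := by
  have hρ : 0 < ρ := one_pos.trans hρ1
  have hAB : 0 < (R ^ 2 - ρ ^ 2) * (ρ ^ 2 - 1) := mul_pos (by nlinarith) (by nlinarith)
  set x := mu ρ - mu R
  have hbound : (R ^ 2 - ρ ^ 2) * (ρ ^ 2 - 1) < ρ ^ 2 * (-2 * x) := by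
    have h := sub_mul_sub_one_div_lt_sub_sub_log (pow_pos hρ 2) (by nlinarith)
      (by nlinarith : ρ ^ 2 ≠ R ^ 2)
    rw [← two_mul_mu_sub_mu hρ.ne' (hρ.trans hρR).ne', div_lt_iff₀ (pow_pos hρ 2)] at h
    linarith
  have hx : x < 0 := by nlinarith
  calc f ρ R = exp x / √(1 - exp (2 * x)) / ρ := by rw [f, div_div, mul_comm]
    _ < 1 / √(-2 * x) / ρ := div_lt_div_of_pos_right (exp_div_sqrt_one_sub_exp_two_mul_lt hx) hρ
    _ = 1 / √(ρ ^ 2 * (-2 * x)) := by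
      rw [sqrt_mul (pow_pos hρ 2).le, sqrt_sq hρ.le, div_div, mul_comm]
    _ < 1 / √((R ^ 2 - ρ ^ 2) * (ρ ^ 2 - 1)) :=
      one_div_lt_one_div_of_lt (sqrt_pos.2 hAB) (sqrt_lt_sqrt hAB.le hbound)

theorem f_upper_bound (R ρ : ℝ) (hR : 1 < R) (hρ1 : 1 < ρ) (hρR : ρ < R) :
    f ρ R < 1 / Real.sqrt ((R ^ 2 - ρ ^ 2) * (ρ ^ 2 - 1)) :=
  f_upper_bound_general R ρ hρ1 hρR
end

section
/- For R > 1 and ρ₂ with 1 < ρ₂ < R, the improper integral ∫_{ρ₂}^{R} f(ρ,R) dρ is finite and satisfies ∫_{ρ₂}^{R} f(ρ,R) dρ ≤ (1/(ρ₂² − 1))·(π/2 − arcsin(exp(μ(ρ₂) − μ(R)))), where f and μ are as defined. -/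
open Real MeasureTheory

/-!
The substitution ξ = exp(μ(ρ) − μ(R)) turns f(ρ, R) dρ into dξ / ((ρ² − 1) √(1 − ξ²)):
precisely, ρ ↦ arcsin (exp (μ ρ − μ R)) has derivative (ρ² − 1) · f(ρ, R) on (1, R).
Since ρ² − 1 ≥ ρ₂² − 1 on [ρ₂, R), the integrand is dominated by 1 / (ρ₂² − 1) times that
derivative, whose integral over [ρ₂, R] is arcsin 1 − arcsin (exp (μ ρ₂ − μ R)).
-/

open Set

theorem integrableOn_Ioo_and_integral_le_sub_of_le_hasDerivAt {f g g' : ℝ → ℝ} {a b : ℝ}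
    (hab : a ≤ b) (hg : ContinuousOn g (Icc a b)) (hderiv : ∀ x ∈ Ioo a b, HasDerivAt g (g' x) x)
    (hf : AEStronglyMeasurable f (volume.restrict (Ioo a b)))
    (hf_nonneg : ∀ x ∈ Ioo a b, 0 ≤ f x) (hfg : ∀ x ∈ Ioo a b, f x ≤ g' x) :
    IntegrableOn f (Ioo a b) ∧ ∫ x in a..b, f x ≤ g b - g a := by
  have hg' : IntegrableOn g' (Ioc a b) := intervalIntegral.integrableOn_deriv_of_nonneg hg hderiv
    fun x hx => (hf_nonneg x hx).trans (hfg x hx)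
  have hf_int : IntegrableOn f (Ioo a b) :=
    (hg'.mono_set Ioo_subset_Ioc_self).mono' hf <| ae_restrict_of_forall_mem measurableSet_Ioo
      fun x hx => (norm_of_nonneg (hf_nonneg x hx)).trans_le (hfg x hx)
  refine ⟨hf_int, ?_⟩
  have hg'_int : IntervalIntegrable g' volume a b :=
    (intervalIntegrable_iff_integrableOn_Ioc_of_le hab).2 hg'
  calc ∫ x in a..b, f x ≤ ∫ x in a..b, g' x :=
        intervalIntegral.integral_mono_on_of_le_Ioo hab
          ((intervalIntegrable_iff_integrableOn_Ioo_of_le hab).2 hf_int) hg'_int hfg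
    _ = g b - g a := intervalIntegral.integral_eq_sub_of_hasDerivAt_of_le hab hg hderiv hg'_int

theorem mu_hasDerivAt {x : ℝ} (hx : 0 < x) : HasDerivAt mu (x - x⁻¹) x := by
  refine (((hasDerivAt_pow 2 x).div_const 2).sub (hasDerivAt_log hx.ne')).congr_deriv ?_
  push_cast
  ring

theorem continuousOn_mu : ContinuousOn mu (Ioi 0) :=
  fun _ hx => (mu_hasDerivAt hx).continuousAt.continuousWithinAt

@[fun_prop]
theorem measurable_mu : Measurable mu := by
  unfold mu; fun_prop

theorem mu_strictMonoOn : StrictMonoOn mu (Ici 1) := by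
  refine strictMonoOn_of_deriv_pos (convex_Ici 1)
    (continuousOn_mu.mono fun _ hx => zero_lt_one.trans_le (α := ℝ) hx) fun x hx => ?_
  rw [interior_Ici] at hx
  have hx0 : 0 < x := zero_lt_one.trans hx
  rw [(mu_hasDerivAt hx0).deriv, sub_pos]
  exact (inv_lt_one_of_one_lt₀ hx).trans hx

theorem exp_mu_sub_lt_one {ρ R : ℝ} (hρ : 1 ≤ ρ) (hρR : ρ < R) : exp (mu ρ - mu R) < 1 :=
  exp_lt_one_iff.2 <| sub_neg.2 <| mu_strictMonoOn hρ (hρ.trans hρR.le) hρR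

theorem f_eq (ρ R : ℝ) :
    f ρ R = exp (mu ρ - mu R) / (ρ * √(1 - exp (mu ρ - mu R) ^ 2)) := by
  rw [f, ← exp_nat_mul]
  norm_num

theorem f_nonneg {ρ : ℝ} (R : ℝ) (hρ : 0 ≤ ρ) : 0 ≤ f ρ R := by
  unfold f; positivity

theorem measurable_f (R : ℝ) : Measurable fun ρ => f ρ R := by
  unfold f; fun_prop

theorem continuousOn_arcsin_exp_mu_sub (R : ℝ) :
    ContinuousOn (fun x => arcsin (exp (mu x - mu R))) (Ioi 0) :=
  continuous_arcsin.comp_continuousOn <| continuous_exp.comp_continuousOn <|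
    continuousOn_mu.sub continuousOn_const

theorem hasDerivAt_arcsin_exp_mu_sub {ρ R : ℝ} (hρ : 1 < ρ) (hρR : ρ < R) :
    HasDerivAt (fun x => arcsin (exp (mu x - mu R))) ((ρ ^ 2 - 1) * f ρ R) ρ := by
  have hρ0 : 0 < ρ := zero_lt_one.trans hρ
  set u := exp (mu ρ - mu R) with hu
  have hu1 : u < 1 := exp_mu_sub_lt_one hρ.le hρR
  have hu0 : 0 < u := exp_pos _
  have hs : 0 < √(1 - u ^ 2) := sqrt_pos.2 (by nlinarith)
  refine ((hasDerivAt_arcsin (by linarith) hu1.ne).comp ρ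
    ((mu_hasDerivAt hρ0).sub_const (mu R)).exp).congr_deriv ?_
  rw [f_eq, ← hu]
  field_simp

theorem integral_f_tail_bound_general (R ρ₂ : ℝ) (hρ₂ : 1 < ρ₂) (hρ₂R : ρ₂ < R) :
    IntegrableOn (fun ρ => f ρ R) (Set.Ioo ρ₂ R) ∧
    ∫ ρ in ρ₂..R, f ρ R ≤
      1 / (ρ₂ ^ 2 - 1) * (Real.pi / 2 - Real.arcsin (Real.exp (mu ρ₂ - mu R))) := by
  have hc : 0 < ρ₂ ^ 2 - 1 := by nlinarith
  obtain ⟨hint, hle⟩ := integrableOn_Ioo_and_integral_le_sub_of_le_hasDerivAt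
    (g := fun x => 1 / (ρ₂ ^ 2 - 1) * arcsin (exp (mu x - mu R)))
    (g' := fun x => 1 / (ρ₂ ^ 2 - 1) * ((x ^ 2 - 1) * f x R)) hρ₂R.le
    (((continuousOn_arcsin_exp_mu_sub R).mono fun _ hx =>
      (zero_lt_one.trans hρ₂).trans_le hx.1).const_mul _)
    (fun x hx => (hasDerivAt_arcsin_exp_mu_sub (hρ₂.trans hx.1) hx.2).const_mul _)
    (measurable_f R).aestronglyMeasurable (fun x hx => f_nonneg R (by linarith [hx.1]))
    fun x hx => by
      rw [← mul_assoc]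
      refine le_mul_of_one_le_left (f_nonneg R (by linarith [hx.1])) ?_
      rw [one_div_mul_eq_div, one_le_div hc]
      nlinarith [hx.1]
  refine ⟨hint, hle.trans_eq ?_⟩
  simp only [sub_self, exp_zero, arcsin_one]
  ring

theorem integral_f_tail_bound (R ρ₂ : ℝ) (hR : 1 < R) (hρ₂ : 1 < ρ₂) (hρ₂R : ρ₂ < R) :
    IntegrableOn (fun ρ => f ρ R) (Set.Ioo ρ₂ R) ∧
    ∫ ρ in ρ₂..R, f ρ R ≤
      1 / (ρ₂ ^ 2 - 1) * (Real.pi / 2 - Real.arcsin (Real.exp (mu ρ₂ - mu R))) :=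
  integral_f_tail_bound_general R ρ₂ hρ₂ hρ₂R
end
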